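/- arXiv:2411.10394 — 2 statements merged into one kernel-verified Lean document; each statement's English description precedes it below -/
import Mathlib

section
/- Fix a DAG G = ([n], E) with weights w ∈ ℝ^E and weight matrix C, and let G* = ([n], E*) be its transitive closure with shortest-path weights w*. For weights w' ∈ ℝ^{E*} on G* with weight matrix C', one has Q(C') = Q(C) if and only if w' lies in the pointed polyhedral cone w* + cone(e_{j→i} : j→i ∈ E* \ E^♭_w); equivalently, if and only if w'(e) = w*(e) for every edge e of G^♭_w and w'(e) ≥ w*(e) for every edge e ∈ E* \ E^♭_w. -/
open scoped Classical
noncomputable section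

/-- The min-plus tropical semiring `T = ℝ ∪ {∞}` with `⊕ = min` and `⊙ = +`. -/
abbrev Trop : Type := WithTop ℝ

/-- Min-plus identity matrix: `0` on the diagonal, `∞` off the diagonal. -/
def mpId {n : ℕ} : Matrix (Fin n) (Fin n) Trop := fun i j => if i = j then 0 else ⊤

/-- Min-plus matrix product. -/
def mpMul {n : ℕ} (A B : Matrix (Fin n) (Fin n) Trop) : Matrix (Fin n) (Fin n) Trop :=
  fun i j => Finset.univ.inf fun k => A i k + B k j

/-- Entrywise minimum (tropical sum) of matrices. -/
def mpAdd {n : ℕ} (A B : Matrix (Fin n) (Fin n) Trop) : Matrix (Fin n) (Fin n) Trop :=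
  fun i j => A i j ⊓ B i j

/-- Min-plus matrix power. -/
def mpPow {n : ℕ} (A : Matrix (Fin n) (Fin n) Trop) : ℕ → Matrix (Fin n) (Fin n) Trop
  | 0 => mpId
  | k + 1 => mpMul (mpPow A k) A

/-- Kleene star `A* = I ⊕ A ⊕ A^{⊙2} ⊕ ⋯ ⊕ A^{⊙(n−1)}`. -/
def kleene {n : ℕ} (A : Matrix (Fin n) (Fin n) Trop) : Matrix (Fin n) (Fin n) Trop :=
  fun i j => (Finset.range n).inf fun k => mpPow A k i j

/-- `p` is a directed path from `j` to `i` in the digraph with edge relation `E`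
(`E a b` meaning there is an edge `a → b`), recorded as its list of vertices. -/
def IsPathFrom {n : ℕ} (E : Fin n → Fin n → Prop) (j i : Fin n) (p : List (Fin n)) : Prop :=
  p.head? = some j ∧ p.getLast? = some i ∧ p.Chain' E

/-- A digraph is acyclic if the only paths from a vertex to itself are trivial. -/
def IsDAG {n : ℕ} (E : Fin n → Fin n → Prop) : Prop :=
  ∀ (j : Fin n) (p : List (Fin n)), IsPathFrom E j j p → p.length ≤ 1

/-- `C ∈ T^{n×n}` is supported on the digraph `E` : zero diagonal, and for `i ≠ j`
the entry `c_ij` is finite exactly when `j → i` is an edge. -/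
def SupportedOn {n : ℕ} (C : Matrix (Fin n) (Fin n) Trop) (E : Fin n → Fin n → Prop) : Prop :=
  (∀ i, C i i = 0) ∧ ∀ i j, i ≠ j → (C i j ≠ ⊤ ↔ E j i)

/-- The edge weight function of a weight matrix: `cw C a b = c_{ba}` is the weight of
the edge `a → b`. -/
def cw {n : ℕ} (C : Matrix (Fin n) (Fin n) Trop) : Fin n → Fin n → ℝ :=
  fun a b => WithTop.untopD 0 (C b a)

/-- Total weight of a path (sum of the weights of its consecutive edges). -/
def pathWeight {n : ℕ} (w : Fin n → Fin n → ℝ) (p : List (Fin n)) : ℝ :=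
  ((p.zip p.tail).map fun q => w q.1 q.2).sum

/-- The edge `j → i` belongs to the weighted transitive reduction `G^♭_w`:
the single edge is the unique minimum-weight directed path from `j` to `i`. -/
def InWTR {n : ℕ} (E : Fin n → Fin n → Prop) (w : Fin n → Fin n → ℝ) (j i : Fin n) : Prop :=
  E j i ∧ ∀ p : List (Fin n), IsPathFrom E j i p → p ≠ [j, i] → w j i < pathWeight w p

/-- Weighted digraph polyhedron `Q(C) = {x : x_i − x_j ≤ c_ij}` (as the saturated
subset of `ℝ^n` representing a subset of `ℝ^n/ℝ𝟙`). -/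
def wdp {n : ℕ} (C : Matrix (Fin n) (Fin n) Trop) : Set (Fin n → ℝ) :=
  {x | ∀ i j, i ≠ j → ((x i - x j : ℝ) : Trop) ≤ C i j}

/-- The tropical polyhedron generated by the columns of `V`: all min-plus linear
combinations `V ⊙ λ`, `λ ∈ ℝ^n` (as a saturated subset of `ℝ^d`). -/
def tconvM {d n : ℕ} (V : Matrix (Fin d) (Fin n) Trop) : Set (Fin d → ℝ) :=
  {x | ∃ lam : Fin n → ℝ, ∀ i, (x i : Trop) = Finset.univ.inf fun j => V i j + (lam j : Trop)}

/-- `v` is reachable from `s`. -/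
def Reaches {n : ℕ} (E : Fin n → Fin n → Prop) (s v : Fin n) : Prop :=
  ∃ p, IsPathFrom E s v p

/-- Edges of the transitive closure `G*`: `j → i` with `i ≠ j` reachable from `j`. -/
def EStar {n : ℕ} (E : Fin n → Fin n → Prop) (j i : Fin n) : Prop :=
  j ≠ i ∧ ∃ p, IsPathFrom E j i p


/-!
Everything is governed by the Kleene star: `kleene C b a` is the supremum of `x b - x a` over
`Q(C)`, approached by points of the tropical span of the columns of `C*`. Hence `Q(C') = Q(C)`
forces `C'* = C*`, which gives `C' ≥ C*` on `G*`; on an edge of `G^♭_w`, a strictly shorter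
`C'`-path in `G*` would pass through an intermediate vertex and expand into a path in `G` that is
no longer than the edge. Conversely, a shortest path in `G` is either an edge of `G^♭_w` or splits
at an intermediate vertex into two shortest paths, so by induction on the number of ancestors the
constraints of `Q(C')` along `G^♭_w` already give `x b - x a ≤ c*_ba`, hence `Q(C') ⊆ Q(C)`.
-/

open Relation

variable {n : ℕ} {S : Fin n → Fin n → Prop} {w : Fin n → Fin n → ℝ} {a b c : Fin n}
  {p q s : List (Fin n)}

namespace IsPathFrom

theorem singleton (a : Fin n) : IsPathFrom S a a [a] := ⟨rfl, rfl, List.IsChain.singleton a⟩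

theorem exists_eq_cons (hp : IsPathFrom S a b p) : ∃ t, p = a :: t := by
  obtain ⟨hh, -, -⟩ := hp
  cases p with
  | nil => simp at hh
  | cons x t => exact ⟨t, by simpa using hh⟩

theorem cons (hab : S a b) (hq : IsPathFrom S b c q) : IsPathFrom S a c (a :: q) := by
  obtain ⟨t, rfl⟩ := hq.exists_eq_cons
  exact ⟨rfl, by rw [List.getLast?_cons_cons]; exact hq.2.1, hq.2.2.cons_cons hab⟩

@[elab_as_elim]
theorem induction {P : ∀ a c p, IsPathFrom S a c p → Prop}
    (single : ∀ a, P a a [a] (.singleton a))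
    (cons : ∀ a b c q (hab : S a b) (hq : IsPathFrom S b c q),
      P b c q hq → P a c (a :: q) (hq.cons hab))
    (hp : IsPathFrom S a c p) : P a c p hp := by
  induction p generalizing a with
  | nil => simp [IsPathFrom] at hp
  | cons x t ih =>
    obtain ⟨hh, hl, hc⟩ := hp
    obtain rfl : x = a := by simpa using hh
    cases t with
    | nil =>
      obtain rfl : x = c := by simpa using hl
      exact single x
    | cons b t =>
      rw [List.getLast?_cons_cons] at hl
      obtain ⟨hxb, hc⟩ := List.isChain_cons_cons.mp hc
      exact cons x b c _ hxb ⟨rfl, hl, hc⟩ (ih ⟨rfl, hl, hc⟩)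

theorem pathWeight_cons (hq : IsPathFrom S b c q) (a : Fin n) :
    pathWeight w (a :: q) = w a b + pathWeight w q := by
  obtain ⟨t, rfl⟩ := hq.exists_eq_cons
  simp [pathWeight]

theorem append (hp : IsPathFrom S a b p) (hq : IsPathFrom S b c q) :
    IsPathFrom S a c (p ++ q.tail) ∧
      pathWeight w (p ++ q.tail) = pathWeight w p + pathWeight w q := by
  induction hp using IsPathFrom.induction with
  | single a =>
    obtain ⟨t, rfl⟩ := hq.exists_eq_cons
    exact ⟨hq, by simp [pathWeight]⟩
  | cons a b' _ p hab hp ih =>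
    obtain ⟨hpq, hw⟩ := ih hq
    refine ⟨hpq.cons hab, ?_⟩
    rw [List.cons_append, hpq.pathWeight_cons, hp.pathWeight_cons, hw, add_assoc]

theorem reflTransGen (hp : IsPathFrom S a b p) : ReflTransGen S a b := by
  induction hp using IsPathFrom.induction with
  | single a => exact .refl
  | cons a b c q hab _ ih => exact ih.head hab

theorem transGen_of_one_lt_length (hp : IsPathFrom S a b p) (hlen : 1 < p.length) :
    TransGen S a b := by
  cases hp using IsPathFrom.induction with
  | single a => simp at hlen
  | cons a b c q hab hq => exact TransGen.head' hab hq.reflTransGen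

end IsPathFrom

theorem exists_isPathFrom_of_reflTransGen (h : ReflTransGen S a b) :
    ∃ p, IsPathFrom S a b p := by
  induction h using ReflTransGen.head_induction_on with
  | refl => exact ⟨_, .singleton b⟩
  | head hac _ ih =>
    obtain ⟨p, hp⟩ := ih
    exact ⟨_, hp.cons hac⟩

theorem EStar.transGen (h : EStar S a b) : TransGen S a b := by
  obtain ⟨hne, p, hp⟩ := h
  exact (reflTransGen_iff_eq_or_transGen.mp hp.reflTransGen).resolve_left (Ne.symm hne)

theorem isDAG_iff : IsDAG S ↔ ∀ a, ¬ TransGen S a a := by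
  refine ⟨fun hdag a ha => ?_, fun h a p hp => ?_⟩
  · obtain ⟨b, hab, hba⟩ := TransGen.head'_iff.mp ha
    obtain ⟨q, hq⟩ := exists_isPathFrom_of_reflTransGen hba
    obtain ⟨t, rfl⟩ := hq.exists_eq_cons
    simpa using hdag a _ (hq.cons hab)
  · by_contra! hlen
    exact h a (hp.transGen_of_one_lt_length hlen)

namespace IsDAG

theorem irrefl (hdag : IsDAG S) (a : Fin n) : ¬ TransGen S a a := isDAG_iff.mp hdag a

theorem ne (hdag : IsDAG S) (h : S a b) : a ≠ b := by
  rintro rfl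
  exact hdag.irrefl a (.single h)

theorem eStar (hdag : IsDAG S) : IsDAG (EStar S) :=
  isDAG_iff.mpr fun a ha => hdag.irrefl a (ha.lift' id fun _ _ h => h.transGen)

end IsDAG

theorem IsPathFrom.length_le (hdag : IsDAG S) (hp : IsPathFrom S a b p) : p.length ≤ n := by
  have hpw : p.Pairwise (TransGen S) :=
    List.isChain_iff_pairwise.mp (hp.2.2.imp fun _ _ => TransGen.single)
  have hnd : p.Nodup := hpw.imp fun {u _} h => by rintro rfl; exact hdag.irrefl u h
  simpa using hnd.length_le_card

theorem IsPathFrom.exists_intermediate (hdag : IsDAG S) (hs : IsPathFrom S a b s)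
    (hne : s ≠ [a, b]) (hab : a ≠ b) :
    ∃ c p q, IsPathFrom S a c p ∧ IsPathFrom S c b q ∧ a ≠ c ∧ c ≠ b ∧
      pathWeight w s = pathWeight w p + pathWeight w q := by
  cases hs using IsPathFrom.induction with
  | single a => exact absurd rfl hab
  | cons a c b q hac hq =>
    refine ⟨c, [a, c], q, (IsPathFrom.singleton c).cons hac, hq, hdag.ne hac, ?_, ?_⟩
    · rintro rfl
      obtain ⟨t, rfl⟩ := hq.exists_eq_cons
      obtain rfl : t = [] := List.length_eq_zero_iff.mp (by simpa using hdag c _ hq)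
      exact hne rfl
    · rw [hq.pathWeight_cons]
      simp [pathWeight]

def numAncestors (S : Fin n → Fin n → Prop) (v : Fin n) : ℕ :=
  (Finset.univ.filter fun u => TransGen S u v).card

theorem numAncestors_lt (hdag : IsDAG S) (h : TransGen S a b) :
    numAncestors S a < numAncestors S b := by
  refine Finset.card_lt_card ((Finset.ssubset_iff_of_subset fun u hu => ?_).mpr ⟨a, ?_, ?_⟩)
  · simp only [Finset.mem_filter, Finset.mem_univ, true_and] at hu ⊢
    exact hu.trans h
  · simpa using h
  · simpa using hdag.irrefl a

section Kleene

variable {C : Matrix (Fin n) (Fin n) Trop}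

theorem SupportedOn.apply_eq_cw (hC : SupportedOn C S) (h : S a b) :
    C b a = (cw C a b : Trop) := by
  by_cases hab : a = b
  · subst hab
    simp [cw, hC.1]
  · obtain ⟨c, hc⟩ := WithTop.ne_top_iff_exists.mp ((hC.2 b a (Ne.symm hab)).mpr h)
    simp [cw, ← hc]

theorem IsPathFrom.mpPow_le_pathWeight (hC : SupportedOn C S) (hp : IsPathFrom S a b p) :
    mpPow C (p.length - 1) b a ≤ pathWeight (cw C) p := by
  induction hp using IsPathFrom.induction with
  | single a => simp [mpPow, mpId, pathWeight]
  | cons a b c q hab hq ih =>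
    obtain ⟨t, rfl⟩ := hq.exists_eq_cons
    calc mpPow C (t.length + 1) c a ≤ mpPow C t.length c b + C b a :=
          Finset.inf_le (Finset.mem_univ b)
      _ ≤ pathWeight (cw C) (b :: t) + cw C a b := by
          rw [hC.apply_eq_cw hab]
          exact add_le_add_left (by simpa using ih) _
      _ = pathWeight (cw C) (a :: b :: t) := by
          rw [hq.pathWeight_cons, add_comm, WithTop.coe_add]

theorem exists_isPathFrom_of_mpPow_ne_top (hC : SupportedOn C S) :
    ∀ k, mpPow C k b a ≠ ⊤ →
      ∃ p, IsPathFrom S a b p ∧ (pathWeight (cw C) p : Trop) ≤ mpPow C k b a := by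
  intro k
  induction k generalizing a with
  | zero =>
    intro h
    by_cases hab : b = a
    · subst hab
      exact ⟨[b], .singleton b, by simp [mpPow, mpId, pathWeight]⟩
    · simp [mpPow, mpId, hab] at h
  | succ k ih =>
    intro h
    obtain ⟨v, -, hv⟩ := Finset.exists_mem_eq_inf Finset.univ ⟨a, Finset.mem_univ a⟩
      fun v => mpPow C k b v + C v a
    have hdef : mpPow C (k + 1) b a = Finset.univ.inf fun v => mpPow C k b v + C v a := rfl
    rw [hdef, hv] at h ⊢
    obtain ⟨hkv, hva⟩ := WithTop.add_ne_top.mp h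
    obtain ⟨q, hq, hqw⟩ := ih hkv
    by_cases hav : a = v
    · subst hav
      exact ⟨q, hq, by simpa [hC.1] using hqw⟩
    · have hedge : S a v := (hC.2 v a (Ne.symm hav)).mp hva
      refine ⟨a :: q, hq.cons hedge, ?_⟩
      rw [hq.pathWeight_cons, WithTop.coe_add, hC.apply_eq_cw hedge, add_comm]
      exact add_le_add_left hqw _

theorem kleene_le_pathWeight (hdag : IsDAG S) (hC : SupportedOn C S) (hp : IsPathFrom S a b p) :
    kleene C b a ≤ pathWeight (cw C) p := by
  obtain ⟨t, rfl⟩ := hp.exists_eq_cons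
  have hlen := hp.length_le hdag
  exact (Finset.inf_le (Finset.mem_range.mpr (by simp at hlen ⊢; omega))).trans
    (hp.mpPow_le_pathWeight hC)

theorem exists_isPathFrom_of_kleene_ne_top (hC : SupportedOn C S) (h : kleene C b a ≠ ⊤) :
    ∃ p, IsPathFrom S a b p ∧ (pathWeight (cw C) p : Trop) ≤ kleene C b a := by
  obtain ⟨k, -, hk⟩ := Finset.exists_mem_eq_inf (Finset.range n)
    (Finset.nonempty_range_iff.mpr a.pos.ne') fun k => mpPow C k b a
  have hdef : kleene C b a = (Finset.range n).inf fun k => mpPow C k b a := rfl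
  rw [hdef, hk] at h ⊢
  exact exists_isPathFrom_of_mpPow_ne_top hC k h

theorem kleene_self (hdag : IsDAG S) (hC : SupportedOn C S) (a : Fin n) : kleene C a a = 0 := by
  refine le_antisymm (by simpa [pathWeight] using kleene_le_pathWeight hdag hC (.singleton a)) ?_
  by_cases htop : kleene C a a = ⊤
  · simp [htop]
  obtain ⟨p, hp, hpw⟩ := exists_isPathFrom_of_kleene_ne_top hC htop
  obtain ⟨t, rfl⟩ := hp.exists_eq_cons
  obtain rfl : t = [] := List.length_eq_zero_iff.mp (by simpa using hdag a _ hp)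
  simpa [pathWeight] using hpw

theorem kleene_le_self (hdag : IsDAG S) (hC : SupportedOn C S) (a b : Fin n) :
    kleene C b a ≤ C b a := by
  by_cases hab : a = b
  · subst hab
    rw [kleene_self hdag hC, hC.1]
  by_cases htop : C b a = ⊤
  · simp [htop]
  have hedge : S a b := (hC.2 b a (Ne.symm hab)).mp htop
  have hp : IsPathFrom S a b [a, b] := (IsPathFrom.singleton b).cons hedge
  simpa [hC.apply_eq_cw hedge, pathWeight] using kleene_le_pathWeight hdag hC hp

theorem kleene_le_add (hdag : IsDAG S) (hC : SupportedOn C S) (a b c : Fin n) :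
    kleene C c a ≤ kleene C c b + kleene C b a := by
  by_cases hcb : kleene C c b = ⊤
  · simp [hcb]
  by_cases hba : kleene C b a = ⊤
  · simp [hba]
  obtain ⟨p, hp, hpw⟩ := exists_isPathFrom_of_kleene_ne_top hC hba
  obtain ⟨q, hq, hqw⟩ := exists_isPathFrom_of_kleene_ne_top hC hcb
  obtain ⟨hpq, hw⟩ := hp.append (w := cw C) hq
  calc kleene C c a ≤ pathWeight (cw C) (p ++ q.tail) := kleene_le_pathWeight hdag hC hpq
    _ = pathWeight (cw C) q + pathWeight (cw C) p := by rw [hw, add_comm, WithTop.coe_add]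
    _ ≤ kleene C c b + kleene C b a := add_le_add hqw hpw

end Kleene

section Polyhedron

variable {C : Matrix (Fin n) (Fin n) Trop} {x : Fin n → ℝ}

theorem sub_le_cw_of_mem_wdp (hC : SupportedOn C S) (hx : x ∈ wdp C) (h : S a b) :
    x b - x a ≤ cw C a b := by
  by_cases hab : a = b
  · subst hab
    simp [cw, hC.1]
  · have := hx b a (Ne.symm hab)
    rwa [hC.apply_eq_cw h, WithTop.coe_le_coe] at this

theorem IsPathFrom.sub_le_pathWeight (hC : SupportedOn C S) (hx : x ∈ wdp C)
    (hp : IsPathFrom S a b p) : x b - x a ≤ pathWeight (cw C) p := by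
  induction hp using IsPathFrom.induction with
  | single a => simp [pathWeight]
  | cons a b c q hab hq ih =>
    rw [hq.pathWeight_cons]
    linarith [sub_le_cw_of_mem_wdp hC hx hab]

theorem sub_le_kleene_of_mem_wdp (hC : SupportedOn C S) (hx : x ∈ wdp C) (a b : Fin n) :
    ((x b - x a : ℝ) : Trop) ≤ kleene C b a := by
  by_cases htop : kleene C b a = ⊤
  · simp [htop]
  obtain ⟨p, hp, hpw⟩ := exists_isPathFrom_of_kleene_ne_top hC htop
  exact (WithTop.coe_le_coe.mpr (hp.sub_le_pathWeight hC hx)).trans hpw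

theorem tconvM_kleene_subset_wdp (hdag : IsDAG S) (hC : SupportedOn C S) :
    tconvM (kleene C) ⊆ wdp C := by
  rintro x ⟨lam, hlam⟩ i j -
  obtain ⟨u, -, hu⟩ := Finset.exists_mem_eq_inf Finset.univ ⟨j, Finset.mem_univ j⟩
    fun u => kleene C j u + (lam u : Trop)
  have hxi : (x i : Trop) ≤ C i j + x j := by
    rw [hlam i, hlam j, hu, ← add_assoc]
    refine (Finset.inf_le (Finset.mem_univ u)).trans ?_
    gcongr
    exact (kleene_le_add hdag hC u j i).trans (by gcongr; exact kleene_le_self hdag hC j i)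
  by_cases htop : C i j = ⊤
  · simp [htop]
  obtain ⟨c, hc⟩ := WithTop.ne_top_iff_exists.mp htop
  rw [← hc, ← WithTop.coe_add, WithTop.coe_le_coe] at hxi
  rw [← hc, WithTop.coe_le_coe]
  linarith

theorem exists_mem_wdp_le_sub (hdag : IsDAG S) (hC : SupportedOn C S) {r : ℝ}
    (hr : (r : Trop) ≤ kleene C b a) : ∃ x ∈ wdp C, r ≤ x b - x a := by
  obtain ⟨M, hM⟩ := Finite.exists_le fun u => r - (kleene C b u).untopD 0
  -- `C* ⊙ lam` is column `a` of `C*`, with the other columns raised by `M` so far that they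
  -- cannot undercut it at `b`.
  set lam : Fin n → ℝ := fun u => if u = a then 0 else M
  have hdiag (v : Fin n) : kleene C v v + (lam v : Trop) = (lam v : Trop) := by
    rw [kleene_self hdag hC, zero_add]
  have hfin (v : Fin n) : (Finset.univ.inf fun u => kleene C v u + (lam u : Trop)) ≠ ⊤ :=
    ne_top_of_le_ne_top WithTop.coe_ne_top ((Finset.inf_le (Finset.mem_univ v)).trans_eq (hdiag v))
  choose x hx using fun v => WithTop.ne_top_iff_exists.mp (hfin v)
  refine ⟨x, tconvM_kleene_subset_wdp hdag hC ⟨lam, hx⟩, ?_⟩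
  have hxa : (x a : Trop) ≤ 0 := by
    rw [hx a, ← WithTop.coe_zero, show (0 : ℝ) = lam a by simp [lam], ← hdiag a]
    exact Finset.inf_le (Finset.mem_univ a)
  have hxb : (r : Trop) ≤ x b := by
    rw [hx b]
    refine Finset.le_inf fun u _ => ?_
    by_cases hua : u = a
    · simpa [hua, lam] using hr
    · rcases eq_or_ne (kleene C b u) ⊤ with htop | hfin
      · simp [htop]
      · obtain ⟨k, hk⟩ := WithTop.ne_top_iff_exists.mp hfin
        have := hM u
        rw [← hk] at this ⊢
        simp only [lam, hua, if_false, WithTop.untopD_coe] at this ⊢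
        exact_mod_cast (by linarith : r ≤ k + M)
  linarith [WithTop.coe_le_coe.mp hxa, WithTop.coe_le_coe.mp hxb]

theorem kleene_le_iff (hdag : IsDAG S) (hC : SupportedOn C S) {t : Trop} :
    kleene C b a ≤ t ↔ ∀ x ∈ wdp C, ((x b - x a : ℝ) : Trop) ≤ t := by
  refine ⟨fun h x hx => (sub_le_kleene_of_mem_wdp hC hx a b).trans h, fun h => ?_⟩
  refine WithTop.forall_coe_le_iff_le.mp fun r hr => ?_
  obtain ⟨x, hx, hrx⟩ := exists_mem_wdp_le_sub hdag hC hr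
  exact (WithTop.coe_le_coe.mpr hrx).trans (h x hx)

theorem kleene_eq_of_wdp_eq {C' : Matrix (Fin n) (Fin n) Trop} {S' : Fin n → Fin n → Prop}
    (hdag : IsDAG S) (hC : SupportedOn C S) (hdag' : IsDAG S') (hC' : SupportedOn C' S')
    (h : wdp C = wdp C') : kleene C = kleene C' :=
  funext fun b => funext fun a => eq_of_forall_ge_iff fun t => by
    rw [kleene_le_iff hdag hC, kleene_le_iff hdag' hC', h]

end Polyhedron

section Reduction

variable {E : Fin n → Fin n → Prop} {C : Matrix (Fin n) (Fin n) Trop}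

theorem exists_intermediate_kleene_add_le (hdag : IsDAG S) (hC : SupportedOn C S)
    (hs : IsPathFrom S a b s) (hne : s ≠ [a, b]) (hab : a ≠ b) :
    ∃ c, EStar S a c ∧ EStar S c b ∧ kleene C b c + kleene C c a ≤ pathWeight (cw C) s := by
  obtain ⟨c, p, q, hp, hq, hac, hcb, hw⟩ := hs.exists_intermediate (w := cw C) hdag hne hab
  refine ⟨c, ⟨hac, p, hp⟩, ⟨hcb, q, hq⟩, ?_⟩
  rw [hw, WithTop.coe_add, add_comm (kleene C b c)]
  exact add_le_add (kleene_le_pathWeight hdag hC hp) (kleene_le_pathWeight hdag hC hq)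

namespace InWTR

theorem kleene_eq (hdag : IsDAG E) (hC : SupportedOn C E) (h : InWTR E (cw C) a b) :
    kleene C b a = C b a := by
  refine (kleene_le_self hdag hC a b).antisymm (not_lt.mp fun hlt => ?_)
  obtain ⟨p, hp, hpw⟩ := exists_isPathFrom_of_kleene_ne_top hC hlt.ne_top
  rw [hC.apply_eq_cw h.1] at hlt
  have hpa : pathWeight (cw C) p < cw C a b := WithTop.coe_lt_coe.mp (hpw.trans_lt hlt)
  by_cases hpe : p = [a, b]
  · subst hpe
    simp [pathWeight] at hpa
  · exact (h.2 p hp hpe).not_gt hpa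

theorem cw_lt_kleene_add (hC : SupportedOn C E) (h : InWTR E (cw C) a b) (hca : c ≠ a)
    (hcb : c ≠ b) : (cw C a b : Trop) < kleene C b c + kleene C c a := by
  by_cases htop : kleene C b c = ⊤
  · simp [htop]
  by_cases htop' : kleene C c a = ⊤
  · simp [htop']
  obtain ⟨p, hp, hpw⟩ := exists_isPathFrom_of_kleene_ne_top hC htop'
  obtain ⟨q, hq, hqw⟩ := exists_isPathFrom_of_kleene_ne_top hC htop
  obtain ⟨hpq, hw⟩ := hp.append (w := cw C) hq
  have hne : p ++ q.tail ≠ [a, b] := fun he => by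
    have hc : c ∈ p ++ q.tail := List.mem_append_left _ (List.mem_of_getLast? hp.2.1)
    simp [he, hca, hcb] at hc
  calc (cw C a b : Trop) < pathWeight (cw C) (p ++ q.tail) :=
        WithTop.coe_lt_coe.mpr (h.2 _ hpq hne)
    _ = pathWeight (cw C) q + pathWeight (cw C) p := by rw [hw, add_comm, WithTop.coe_add]
    _ ≤ kleene C b c + kleene C c a := add_le_add hqw hpw

end InWTR

theorem inWTR_or_exists_intermediate (hdag : IsDAG E) (hC : SupportedOn C E)
    (hab : EStar E a b) :
    InWTR E (cw C) a b ∨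
      ∃ c, EStar E a c ∧ EStar E c b ∧ kleene C b c + kleene C c a ≤ kleene C b a := by
  refine or_iff_not_imp_left.mpr fun hw => ?_
  obtain ⟨p₀, hp₀⟩ := hab.2
  obtain ⟨p, hp, hpw⟩ := exists_isPathFrom_of_kleene_ne_top hC
    (ne_top_of_le_ne_top WithTop.coe_ne_top (kleene_le_pathWeight hdag hC hp₀))
  obtain ⟨s, hs, hne, hsw⟩ : ∃ s, IsPathFrom E a b s ∧ s ≠ [a, b] ∧
      (pathWeight (cw C) s : Trop) ≤ kleene C b a := by
    by_cases hpe : p = [a, b]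
    · subst hpe
      have hedge : E a b := (List.isChain_cons_cons.mp hp.2.2).1
      obtain ⟨s, hs, hne, hsw⟩ : ∃ s, IsPathFrom E a b s ∧ s ≠ [a, b] ∧
          pathWeight (cw C) s ≤ cw C a b := by
        simpa [InWTR, hedge] using hw
      exact ⟨s, hs, hne, (WithTop.coe_le_coe.mpr hsw).trans (by simpa [pathWeight] using hpw)⟩
    · exact ⟨p, hp, hpe, hpw⟩
  obtain ⟨c, hac, hcb, hle⟩ := exists_intermediate_kleene_add_le hdag hC hs hne hab.1
  exact ⟨c, hac, hcb, hle.trans hsw⟩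

theorem sub_le_kleene_of_inWTR (hdag : IsDAG E) (hC : SupportedOn C E) {x : Fin n → ℝ}
    (hx : ∀ a b, InWTR E (cw C) a b → x b - x a ≤ cw C a b) (a b : Fin n) :
    ((x b - x a : ℝ) : Trop) ≤ kleene C b a := by
  by_cases hba : b = a
  · subst hba
    simp [kleene_self hdag hC]
  by_cases htop : kleene C b a = ⊤
  · simp [htop]
  obtain ⟨p, hp, -⟩ := exists_isPathFrom_of_kleene_ne_top hC htop
  rcases inWTR_or_exists_intermediate hdag hC ⟨Ne.symm hba, p, hp⟩ with
    hw | ⟨c, hac, hcb, hle⟩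
  · rw [hw.kleene_eq hdag hC, hC.apply_eq_cw hw.1]
    exact WithTop.coe_le_coe.mpr (hx a b hw)
  · have := numAncestors_lt hdag hac.transGen
    have := numAncestors_lt hdag hcb.transGen
    calc ((x b - x a : ℝ) : Trop) = ((x b - x c : ℝ) : Trop) + ((x c - x a : ℝ) : Trop) := by
          rw [← WithTop.coe_add, sub_add_sub_cancel]
      _ ≤ kleene C b c + kleene C c a :=
          add_le_add (sub_le_kleene_of_inWTR hdag hC hx c b)
            (sub_le_kleene_of_inWTR hdag hC hx a c)
      _ ≤ kleene C b a := hle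
termination_by numAncestors E b - numAncestors E a

theorem mem_wdp_of_inWTR (hdag : IsDAG E) (hC : SupportedOn C E) {x : Fin n → ℝ}
    (hx : ∀ a b, InWTR E (cw C) a b → x b - x a ≤ cw C a b) : x ∈ wdp C := fun i j _ =>
  (sub_le_kleene_of_inWTR hdag hC hx j i).trans (kleene_le_self hdag hC j i)

theorem InWTR.apply_le_kleene_of_kleene_eq {C' : Matrix (Fin n) (Fin n) Trop}
    (hdag : IsDAG E) (hC : SupportedOn C E) (hC' : SupportedOn C' (EStar E))
    (hK : kleene C' = kleene C) (h : InWTR E (cw C) a b) : C' b a ≤ kleene C b a := by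
  have hfin : kleene C' b a ≠ ⊤ := by
    rw [hK, h.kleene_eq hdag hC, hC.apply_eq_cw h.1]
    exact WithTop.coe_ne_top
  obtain ⟨q, hq, hqw⟩ := exists_isPathFrom_of_kleene_ne_top hC' hfin
  rw [hK] at hqw
  obtain rfl : q = [a, b] := by
    by_contra hqe
    obtain ⟨c, hac, hcb, hle⟩ :=
      exists_intermediate_kleene_add_le hdag.eStar hC' hq hqe (hdag.ne h.1)
    have hle' := hle.trans hqw
    rw [hK, h.kleene_eq hdag hC, hC.apply_eq_cw h.1] at hle'
    exact ((h.cw_lt_kleene_add hC hac.1.symm hcb.1).trans_le hle').false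
  rw [hC'.apply_eq_cw (List.isChain_cons_cons.mp hq.2.2).1]
  simpa [pathWeight] using hqw

end Reduction

/-- Fix a weighted DAG `(G, w)` with weight matrix `C`, and let `C'` be
the weight matrix of weights `w'` on the transitive closure `G*`. Then `Q(C') = Q(C)` iff
`w'` lies in the cone `w* + cone(e_{j→i} : j→i ∈ E* \ E^♭_w)`, i.e. iff `w'(e) = w*(e)`
for every edge `e` of `G^♭_w` and `w'(e) ≥ w*(e)` for every edge `e ∈ E* \ E^♭_w`
(the entry of the Kleene star `(kleene C) i j` being `w*(j→i)`). -/
theorem stmt6 {n : ℕ} (E : Fin n → Fin n → Prop) (C C' : Matrix (Fin n) (Fin n) Trop)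
    (hdag : IsDAG E) (hsupp : SupportedOn C E) (hsupp' : SupportedOn C' (EStar E)) :
    wdp C' = wdp C ↔
      (∀ j i, InWTR E (cw C) j i → C' i j = kleene C i j) ∧
      (∀ j i, EStar E j i → ¬ InWTR E (cw C) j i → kleene C i j ≤ C' i j) := by
  constructor
  · intro hQ
    have hK : kleene C' = kleene C := kleene_eq_of_wdp_eq hdag.eStar hsupp' hdag hsupp hQ
    have hle (i j : Fin n) : kleene C i j ≤ C' i j := hK ▸ kleene_le_self hdag.eStar hsupp' j i
    exact ⟨fun j i h => (h.apply_le_kleene_of_kleene_eq hdag hsupp hsupp' hK).antisymm (hle i j),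
      fun j i _ _ => hle i j⟩
  · rintro ⟨hwtr, hrest⟩
    refine subset_antisymm (fun x hx => mem_wdp_of_inWTR hdag hsupp fun a b h => ?_)
      fun x hx i j hij => ?_
    · have := hx b a (hdag.ne h.1).symm
      rwa [hwtr a b h, h.kleene_eq hdag hsupp, hsupp.apply_eq_cw h.1, WithTop.coe_le_coe] at this
    · by_cases htop : C' i j = ⊤
      · simp [htop]
      refine (sub_le_kleene_of_mem_wdp hsupp hx j i).trans ?_
      by_cases h : InWTR E (cw C) j i
      · exact (hwtr j i h).ge
      · exact hrest j i ((hsupp'.2 i j hij).mp htop) h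
end
end

section
/- Let G = ([n], E) be a DAG with weights w ∈ ℝ^E and weight matrix C. Then Q(C) = Q(C^♭), and (G^♭_w, w^♭) is the unique minimal such weighted DAG: for every DAG H with edge set contained in E* and every weights u on H with weight matrix C_u such that Q(C_u) = Q(C), one has G^♭_w ⊆ H and u agrees with w^♭ on the edges of G^♭_w; moreover, w^♭ is the unique weight vector u ∈ ℝ^{E^♭_w} on G^♭_w with Q(C_u) = Q(C^♭). -/
open scoped Classical
noncomputable section

/-- The weight matrix `C^♭` of the weighted transitive reduction `(G^♭_w, w^♭)`. -/
def CflatM {n : ℕ} (E : Fin n → Fin n → Prop) (C : Matrix (Fin n) (Fin n) Trop) :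
    Matrix (Fin n) (Fin n) Trop :=
  fun a b => if a = b then 0 else if InWTR E (cw C) b a then C a b else ⊤

/-!
For `x ∈ Q(C^♭)`, the inequality of an edge `a → b` outside `G^♭_w` follows from a detour of
weight at most `w(a → b)` whose edges all span strictly less of the DAG; induction on this span
gives `Q(C^♭) ⊆ Q(C)`.

For minimality, let `x ∈ Q(C)` be the point of shortest-path distances from `j`, with the
vertices unreachable from `j` placed very high. If `j → i` lies in `G^♭_w`, then
`x_i - x_j = w(j → i)`, so `x_i` cannot be raised inside `Q(C) = Q(C_u)`, and some inequality
`x_i - x_b ≤ (C_u)_{ib}` is tight. Comparing it with the distance point from `b` shows that `b`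
lies on a path from `j` to `i` of weight at most `w(j → i)`, so `b = j` by uniqueness of the
minimum-weight path.
-/

open Relation Finset Topology

section Paths

variable {n : ℕ} {E : Fin n → Fin n → Prop} {s t : Fin n} {p : List (Fin n)}

theorem isPathFrom_iff :
    IsPathFrom E s t p ↔ p.head? = some s ∧ p.getLast? = some t ∧ p.IsChain E :=
  Iff.rfl

theorem IsPathFrom.ne_nil (hp : IsPathFrom E s t p) : p ≠ [] := by
  rintro rfl
  simp [isPathFrom_iff] at hp

theorem IsPathFrom.exists_eq_cons_s9 (hp : IsPathFrom E s t p) : ∃ q, p = s :: q :=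
  List.head?_eq_some_iff.1 hp.1

theorem isPathFrom_singleton_iff {a : Fin n} : IsPathFrom E s t [a] ↔ a = s ∧ a = t := by
  simp [isPathFrom_iff]

theorem isPathFrom_pair {a b : Fin n} (h : E a b) : IsPathFrom E a b [a, b] :=
  ⟨rfl, rfl, .cons_cons h (.singleton b)⟩

theorem isPathFrom_cons_cons_iff {a c : Fin n} {q : List (Fin n)} :
    IsPathFrom E s t (a :: c :: q) ↔ a = s ∧ E a c ∧ IsPathFrom E c t (c :: q) := by
  simp only [isPathFrom_iff, List.isChain_cons_cons, List.head?_cons, Option.some.injEq,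
    List.getLast?_cons_cons]
  tauto

theorem IsPathFrom.reflTransGen_s9 : ∀ {s : Fin n} {p : List (Fin n)},
    IsPathFrom E s t p → ReflTransGen E s t
  | _, [], hp => absurd rfl hp.ne_nil
  | _, [_], hp => by
    obtain ⟨rfl, rfl⟩ := isPathFrom_singleton_iff.1 hp
    exact .refl
  | _, _ :: _ :: _, hp => by
    obtain ⟨rfl, hac, hq⟩ := isPathFrom_cons_cons_iff.1 hp
    exact .head hac hq.reflTransGen_s9

theorem reaches_iff_reflTransGen : Reaches E s t ↔ ReflTransGen E s t := by
  refine ⟨fun ⟨_, hp⟩ => hp.reflTransGen_s9, fun h => ?_⟩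
  obtain ⟨l, hl, hlast⟩ := List.exists_isChain_cons_of_relationReflTransGen h
  refine ⟨s :: l, rfl, ?_, hl⟩
  rw [List.getLast?_eq_getLast_of_ne_nil (List.cons_ne_nil _ _), hlast]

theorem IsPathFrom.append_s9 {m : Fin n} {q : List (Fin n)} (hq : IsPathFrom E m t (m :: q)) :
    ∀ {s : Fin n} {p : List (Fin n)}, IsPathFrom E s m p → IsPathFrom E s t (p ++ q)
  | _, [], hp => absurd rfl hp.ne_nil
  | _, [_], hp => by
    obtain ⟨rfl, rfl⟩ := isPathFrom_singleton_iff.1 hp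
    exact hq
  | _, _ :: c :: _, hp => by
    obtain ⟨rfl, hac, hp'⟩ := isPathFrom_cons_cons_iff.1 hp
    exact isPathFrom_cons_cons_iff.2 ⟨rfl, hac, append_s9 hq hp'⟩

variable (w : Fin n → Fin n → ℝ)

@[simp] theorem pathWeight_singleton (a : Fin n) : pathWeight w [a] = 0 := by
  simp [pathWeight]

@[simp] theorem pathWeight_cons_cons (a b : Fin n) (q : List (Fin n)) :
    pathWeight w (a :: b :: q) = w a b + pathWeight w (b :: q) := by
  simp [pathWeight]

theorem pathWeight_append {m : Fin n} (q : List (Fin n)) :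
    ∀ {p : List (Fin n)}, p.getLast? = some m →
      pathWeight w (p ++ q) = pathWeight w p + pathWeight w (m :: q)
  | [], hp => by simp at hp
  | [_], hp => by
    obtain rfl : _ = m := by simpa using hp
    simp
  | a :: c :: r, hp => by
    rw [List.getLast?_cons_cons] at hp
    change pathWeight w (a :: c :: (r ++ q)) = _
    rw [pathWeight_cons_cons, ← List.cons_append, pathWeight_append q hp, pathWeight_cons_cons]
    ring

variable {w}

theorem IsPathFrom.sub_le_pathWeight_s9 {x : Fin n → ℝ}
    (hx : ∀ u v, E u v → ReflTransGen E s u → ReflTransGen E v t → x v - x u ≤ w u v) :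
    IsPathFrom E s t p → x t - x s ≤ pathWeight w p := by
  induction p generalizing s with
  | nil => exact fun hp => absurd rfl hp.ne_nil
  | cons a q ih =>
    intro hp
    rcases q with _ | ⟨c, q⟩
    · obtain ⟨rfl, rfl⟩ := isPathFrom_singleton_iff.1 hp
      simp
    · obtain ⟨rfl, hac, hq⟩ := isPathFrom_cons_cons_iff.1 hp
      have hfirst := hx a c hac .refl hq.reflTransGen_s9
      have hrest := ih (fun u v huv hcu hvt => hx u v huv (hcu.head hac) hvt) hq
      rw [pathWeight_cons_cons]
      linarith

end Paths

section DAG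

variable {n : ℕ} {E : Fin n → Fin n → Prop}

theorem IsDAG.not_transGen_self (hdag : IsDAG E) (a : Fin n) : ¬ TransGen E a a := by
  intro h
  obtain ⟨c, hac, hca⟩ := TransGen.head'_iff.1 h
  obtain ⟨p, hp⟩ := reaches_iff_reflTransGen.2 hca
  obtain ⟨q, rfl⟩ := hp.exists_eq_cons_s9
  have := hdag a _ (hp.append_s9 (isPathFrom_pair hac))
  simp at this

theorem IsDAG.ne_of_edge (hdag : IsDAG E) {a b : Fin n} (h : E a b) : a ≠ b := by
  rintro rfl
  exact hdag.not_transGen_self a (.single h)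

theorem IsDAG.nodup_of_isChain (hdag : IsDAG E) {p : List (Fin n)} (hp : p.IsChain E) :
    p.Nodup :=
  (List.isChain_iff_pairwise.1 (hp.imp fun _ _ => TransGen.single)).imp fun {a _} h => by
    rintro rfl
    exact hdag.not_transGen_self a h

theorem IsDAG.finite_paths (hdag : IsDAG E) : {p | ∃ s t, IsPathFrom E s t p}.Finite :=
  (List.finite_length_le (Fin n) n).subset fun _ ⟨_, _, hp⟩ => by
    simpa using (hdag.nodup_of_isChain hp.2.2).length_le_card

theorem IsDAG.exists_abs_pathWeight_le (hdag : IsDAG E) (w : Fin n → Fin n → ℝ) :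
    ∃ D > 0, ∀ s t p, IsPathFrom E s t p → |pathWeight w p| ≤ D := by
  obtain ⟨D, hD⟩ := (hdag.finite_paths.image fun p => |pathWeight w p|).bddAbove
  exact ⟨max D 1, by positivity,
    fun s t p hp => (hD ⟨p, ⟨s, t, hp⟩, rfl⟩).trans (le_max_left _ _)⟩

def descendants (E : Fin n → Fin n → Prop) (v : Fin n) : Finset (Fin n) :=
  {u | TransGen E v u}

theorem card_descendants_lt (hdag : IsDAG E) {a b : Fin n} (h : TransGen E a b) :
    #(descendants E b) < #(descendants E a) := by
  refine Finset.card_lt_card ⟨fun u hu => ?_, fun hsub => ?_⟩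
  · simp only [descendants, Finset.mem_filter, Finset.mem_univ, true_and] at hu ⊢
    exact h.trans hu
  · have := hsub (by simpa [descendants] using h)
    exact hdag.not_transGen_self b (by simpa [descendants] using this)

theorem card_descendants_le (hdag : IsDAG E) {a b : Fin n} (h : ReflTransGen E a b) :
    #(descendants E b) ≤ #(descendants E a) := by
  rcases reflTransGen_iff_eq_or_transGen.1 h with rfl | h
  · exact le_rfl
  · exact (card_descendants_lt hdag h).le

end DAG

section Reduction

variable {n : ℕ} {E : Fin n → Fin n → Prop} {w : Fin n → Fin n → ℝ}

theorem sub_le_of_forall_inWTR (hdag : IsDAG E) {x : Fin n → ℝ}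
    (hx : ∀ a b, InWTR E w a b → x b - x a ≤ w a b) {a b : Fin n} (hab : E a b) :
    x b - x a ≤ w a b := by
  induction hk : #(descendants E a) - #(descendants E b) using Nat.strong_induction_on
    generalizing a b with
  | _ k ih =>
  by_cases hw : InWTR E w a b
  · exact hx a b hw
  obtain ⟨p, hp, hne, hle⟩ :
      ∃ p, IsPathFrom E a b p ∧ p ≠ [a, b] ∧ pathWeight w p ≤ w a b := by
    simpa [InWTR, hab] using hw
  obtain ⟨c, q, rfl⟩ : ∃ c q, p = a :: c :: q := by
    obtain ⟨_ | ⟨c, q⟩, rfl⟩ := hp.exists_eq_cons_s9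
    · exact absurd (isPathFrom_singleton_iff.1 hp).2 (hdag.ne_of_edge hab)
    · exact ⟨c, q, rfl⟩
  obtain ⟨-, hac, hq⟩ := isPathFrom_cons_cons_iff.1 hp
  have hcb : TransGen E c b := by
    refine (reflTransGen_iff_eq_or_transGen.1 hq.reflTransGen_s9).resolve_left ?_
    rintro rfl
    have := hdag b _ hq
    simp_all
  have hfirst : x c - x a ≤ w a c := by
    have := card_descendants_lt hdag (.single hac)
    have := card_descendants_lt hdag hcb
    exact ih _ (by omega) hac rfl
  have hrest : x b - x c ≤ pathWeight w (c :: q) := hq.sub_le_pathWeight_s9 fun u v huv hcu hvb => by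
    have := card_descendants_lt hdag (.head' hac hcu)
    have := card_descendants_le hdag hvb
    have := card_descendants_lt hdag (.single huv)
    exact ih _ (by omega) huv rfl
  rw [pathWeight_cons_cons] at hle
  linarith

end Reduction

section PathDist

variable {n : ℕ} {E : Fin n → Fin n → Prop} {w : Fin n → Fin n → ℝ} {s t : Fin n}

-- `sInf ∅ = 0`: the junk value when `t` is not reachable from `s`.
def pathDist (E : Fin n → Fin n → Prop) (w : Fin n → Fin n → ℝ) (s t : Fin n) : ℝ :=
  sInf (pathWeight w '' {p | IsPathFrom E s t p})

theorem IsDAG.finite_pathWeight_image (hdag : IsDAG E) :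
    (pathWeight w '' {p | IsPathFrom E s t p}).Finite :=
  (hdag.finite_paths.subset fun _ hp => ⟨s, t, hp⟩).image _

theorem pathDist_le (hdag : IsDAG E) {p : List (Fin n)} (hp : IsPathFrom E s t p) :
    pathDist E w s t ≤ pathWeight w p :=
  csInf_le hdag.finite_pathWeight_image.bddBelow ⟨p, hp, rfl⟩

theorem exists_pathWeight_eq_pathDist (hdag : IsDAG E) (h : Reaches E s t) :
    ∃ p, IsPathFrom E s t p ∧ pathWeight w p = pathDist E w s t :=
  (Set.Nonempty.image _ h).csInf_mem hdag.finite_pathWeight_image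

theorem abs_pathDist_le (hdag : IsDAG E) {D : ℝ}
    (hD : ∀ s t p, IsPathFrom E s t p → |pathWeight w p| ≤ D) (h : Reaches E s t) :
    |pathDist E w s t| ≤ D := by
  obtain ⟨p, hp, hpw⟩ := exists_pathWeight_eq_pathDist (w := w) hdag h
  exact hpw ▸ hD s t p hp

theorem pathDist_self (hdag : IsDAG E) (s : Fin n) : pathDist E w s s = 0 := by
  obtain ⟨p, hp, hpw⟩ :=
    exists_pathWeight_eq_pathDist (w := w) hdag ⟨[s], isPathFrom_singleton_iff.2 ⟨rfl, rfl⟩⟩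
  obtain ⟨_ | ⟨c, q⟩, rfl⟩ := hp.exists_eq_cons_s9
  · simpa using hpw.symm
  · simpa using hdag s _ hp

theorem pathDist_le_add (hdag : IsDAG E) {a b : Fin n} (h : Reaches E s a) (hab : E a b) :
    pathDist E w s b ≤ pathDist E w s a + w a b := by
  obtain ⟨p, hp, hpw⟩ := exists_pathWeight_eq_pathDist (w := w) hdag h
  have := pathDist_le (w := w) hdag ((isPathFrom_pair hab).append_s9 hp)
  rwa [pathWeight_append w [b] hp.2.1, hpw, pathWeight_cons_cons, pathWeight_singleton,
    add_zero] at this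

theorem InWTR.pathDist_eq (hdag : IsDAG E) {j i : Fin n} (h : InWTR E w j i) :
    pathDist E w j i = w j i := by
  have hpair := isPathFrom_pair h.1
  refine le_antisymm (by simpa using pathDist_le (w := w) hdag hpair) ?_
  obtain ⟨p, hp, hpw⟩ := exists_pathWeight_eq_pathDist (w := w) hdag ⟨_, hpair⟩
  rw [← hpw]
  by_cases hpe : p = [j, i]
  · simp [hpe]
  · exact (h.2 p hp hpe).le

theorem InWTR.lt_pathDist_add (hdag : IsDAG E) {j i b : Fin n} (h : InWTR E w j i)
    (hjb : Reaches E j b) (hbi : Reaches E b i) (hbj : b ≠ j) (hib : b ≠ i) :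
    w j i < pathDist E w j b + pathDist E w b i := by
  obtain ⟨p, hp, hpw⟩ := exists_pathWeight_eq_pathDist (w := w) hdag hjb
  obtain ⟨q, hq, hqw⟩ := exists_pathWeight_eq_pathDist (w := w) hdag hbi
  obtain ⟨q, rfl⟩ := hq.exists_eq_cons_s9
  rw [← hpw, ← hqw, ← pathWeight_append w q hp.2.1]
  refine h.2 _ (hq.append_s9 hp) fun heq => ?_
  have hb : b ∈ p ++ q := List.mem_append_left _ (List.mem_of_getLast? hp.2.1)
  simp [heq, hbj, hib] at hb

end PathDist

section Polyhedron

variable {n : ℕ} {E : Fin n → Fin n → Prop} {A B C : Matrix (Fin n) (Fin n) Trop}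
  {x : Fin n → ℝ}

theorem coe_cw {i j : Fin n} (h : C i j ≠ ⊤) : C i j = (cw C j i : Trop) := by
  obtain ⟨c, hc⟩ := WithTop.ne_top_iff_exists.1 h
  simp [cw, ← hc]

theorem SupportedOn.mem_wdp_iff (hC : SupportedOn C E) :
    x ∈ wdp C ↔ ∀ a b, E a b → x b - x a ≤ cw C a b := by
  refine ⟨fun hx a b hab => ?_, fun hx i j hij => ?_⟩
  · by_cases hba : b = a
    · simp [hba, cw, hC.1]
    · have := hx b a hba
      rwa [coe_cw ((hC.2 b a hba).2 hab), WithTop.coe_le_coe] at this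
  · by_cases hfin : C i j = ⊤
    · simp [hfin]
    · rw [coe_cw hfin, WithTop.coe_le_coe]
      exact hx j i ((hC.2 i j hij).1 hfin)

theorem SupportedOn.ext {F : Fin n → Fin n → Prop} (hA : SupportedOn A F) (hB : SupportedOn B F)
    (h : ∀ a b, a ≠ b → F b a → A a b = B a b) : A = B := by
  ext a b
  by_cases hab : a = b
  · rw [hab, hA.1, hB.1]
  by_cases hF : F b a
  · exact h a b hab hF
  · rw [not_not.1 (mt (hA.2 a b hab).1 hF), not_not.1 (mt (hB.2 a b hab).1 hF)]

theorem cflatM_apply_of_inWTR {a b : Fin n} (hab : a ≠ b) (hw : InWTR E (cw C) b a) :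
    CflatM E C a b = C a b := by
  simp [CflatM, hab, hw]

theorem cw_cflatM (hC : SupportedOn C E) {a b : Fin n} (hw : InWTR E (cw C) a b) :
    cw (CflatM E C) a b = cw C a b := by
  by_cases hab : b = a
  · simp [cw, CflatM, hab, hC.1]
  · rw [cw, cflatM_apply_of_inWTR hab hw, cw]

theorem SupportedOn.cflatM (hC : SupportedOn C E) :
    SupportedOn (CflatM E C) (InWTR E (cw C)) := by
  refine ⟨fun i => by simp [CflatM], fun i j hij => ?_⟩
  by_cases hw : InWTR E (cw C) j i
  · simpa [CflatM, hij, hw] using (hC.2 i j hij).2 hw.1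
  · simp [CflatM, hij, hw]

theorem wdp_eq_wdp_cflatM (hdag : IsDAG E) (hC : SupportedOn C E) :
    wdp C = wdp (CflatM E C) := by
  ext x
  rw [hC.mem_wdp_iff, hC.cflatM.mem_wdp_iff]
  refine ⟨fun hx a b hw => (cw_cflatM hC hw).symm ▸ hx a b hw.1, fun hx a b hab => ?_⟩
  exact sub_le_of_forall_inWTR hdag (fun a b hw => cw_cflatM hC hw ▸ hx a b hw) hab

theorem exists_update_mem_wdp_iff (hx : x ∈ wdp A) (i : Fin n) :
    (∃ ε > 0, Function.update x i (x i + ε) ∈ wdp A) ↔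
      ∀ b, i ≠ b → ((x i - x b : ℝ) : Trop) < A i b := by
  constructor
  · rintro ⟨ε, hε, hmem⟩ b hib
    have := hmem i b hib
    rw [Function.update_self, Function.update_of_ne (Ne.symm hib)] at this
    exact lt_of_lt_of_le (WithTop.coe_lt_coe.2 (by linarith)) this
  · intro hslack
    have hev :
        ∀ b, ∀ᶠ ε in 𝓝[>] (0 : ℝ), i ≠ b → ((x i + ε - x b : ℝ) : Trop) ≤ A i b := by
      intro b
      by_cases hib : i = b
      · simp [hib]
      by_cases htop : A i b = ⊤
      · simp [htop]
      obtain ⟨c, hc⟩ := WithTop.ne_top_iff_exists.1 htop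
      have hlt : x i - x b < c := by exact_mod_cast hc ▸ hslack b hib
      filter_upwards [nhdsWithin_le_nhds (eventually_lt_nhds (sub_pos.2 hlt))] with ε hε _
      rw [← hc, WithTop.coe_le_coe]
      linarith
    obtain ⟨ε, hε, hpos⟩ := ((Filter.eventually_all.2 hev).and self_mem_nhdsWithin).exists
    refine ⟨ε, hpos, fun a b hab => ?_⟩
    by_cases ha : a = i
    · subst ha
      rw [Function.update_self, Function.update_of_ne (Ne.symm hab)]
      exact hε b hab
    · have hb : x b ≤ Function.update x i (x i + ε) b := by
        by_cases hb : b = i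
        · subst hb
          simpa using le_of_lt (show (0 : ℝ) < ε from hpos)
        · rw [Function.update_of_ne hb]
      rw [Function.update_of_ne ha]
      exact le_trans (WithTop.coe_le_coe.2 (by linarith)) (hx a b hab)

theorem exists_eq_sub_of_wdp_eq (hAB : wdp A = wdp B) (hx : x ∈ wdp B) {i j : Fin n}
    (hij : i ≠ j) (htight : B i j = ((x i - x j : ℝ) : Trop)) :
    ∃ b, i ≠ b ∧ A i b = ((x i - x b : ℝ) : Trop) := by
  have hfixed : ¬ ∃ ε > 0, Function.update x i (x i + ε) ∈ wdp A := by
    rw [hAB, exists_update_mem_wdp_iff hx i]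
    exact fun h => (h j hij).ne htight.symm
  rw [← hAB] at hx
  rw [exists_update_mem_wdp_iff hx i] at hfixed
  push Not at hfixed
  obtain ⟨b, hib, hle⟩ := hfixed
  exact ⟨b, hib, le_antisymm hle (hx i b hib)⟩

end Polyhedron

section Minimality

variable {n : ℕ} {E : Fin n → Fin n → Prop} {w : Fin n → Fin n → ℝ} {D : ℝ} {s : Fin n}

/-- Vertices unreachable from `s` sit at least `3 * D` high and drop by at least `D` along every
edge; for `D` bounding all path weights this keeps the point in `Q(C)`, far above the reachable
part. -/
def distPoint (E : Fin n → Fin n → Prop) (w : Fin n → Fin n → ℝ) (D : ℝ) (s : Fin n) :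
    Fin n → ℝ :=
  fun v => if Reaches E s v then pathDist E w s v else D * (3 + #(descendants E v))

theorem distPoint_of_reaches {v : Fin n} (h : Reaches E s v) :
    distPoint E w D s v = pathDist E w s v :=
  if_pos h

theorem distPoint_self (hdag : IsDAG E) : distPoint E w D s s = 0 := by
  rw [distPoint_of_reaches ⟨[s], isPathFrom_singleton_iff.2 ⟨rfl, rfl⟩⟩, pathDist_self hdag]

theorem three_mul_le_distPoint (hD0 : 0 ≤ D) {v : Fin n} (h : ¬ Reaches E s v) :
    3 * D ≤ distPoint E w D s v := by
  rw [distPoint, if_neg h]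
  nlinarith [(#(descendants E v)).cast_nonneg (α := ℝ)]

theorem abs_le_of_edge (hD : ∀ s t p, IsPathFrom E s t p → |pathWeight w p| ≤ D) {a b : Fin n}
    (hab : E a b) : |w a b| ≤ D := by
  simpa using hD a b _ (isPathFrom_pair hab)

theorem distPoint_sub_le (hdag : IsDAG E) (hD0 : 0 ≤ D)
    (hD : ∀ s t p, IsPathFrom E s t p → |pathWeight w p| ≤ D) {a b : Fin n} (hab : E a b) :
    distPoint E w D s b - distPoint E w D s a ≤ w a b := by
  have hwab := (abs_le.1 (abs_le_of_edge hD hab)).1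
  by_cases hsa : Reaches E s a
  · have hsb : Reaches E s b :=
      reaches_iff_reflTransGen.2 ((reaches_iff_reflTransGen.1 hsa).tail hab)
    rw [distPoint_of_reaches hsa, distPoint_of_reaches hsb]
    linarith [pathDist_le_add (w := w) hdag hsa hab]
  have ha := three_mul_le_distPoint (w := w) hD0 hsa
  by_cases hsb : Reaches E s b
  · rw [distPoint_of_reaches hsb]
    linarith [(abs_le.1 (abs_pathDist_le hdag hD hsb)).2]
  · have hlt : (#(descendants E b) : ℝ) + 1 ≤ #(descendants E a) := by
      exact_mod_cast card_descendants_lt hdag (.single hab)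
    simp only [distPoint, if_neg hsa, if_neg hsb]
    nlinarith

theorem distPoint_mem_wdp {C : Matrix (Fin n) (Fin n) Trop} (hdag : IsDAG E)
    (hC : SupportedOn C E) (hD0 : 0 ≤ D)
    (hD : ∀ s t p, IsPathFrom E s t p → |pathWeight (cw C) p| ≤ D) (s : Fin n) :
    distPoint E (cw C) D s ∈ wdp C :=
  hC.mem_wdp_iff.2 fun _ _ hab => distPoint_sub_le hdag hD0 hD hab

theorem InWTR.edge_and_eq_of_wdp_eq {C Cu : Matrix (Fin n) (Fin n) Trop}
    {EH : Fin n → Fin n → Prop} (hdag : IsDAG E) (hC : SupportedOn C E)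
    (hEH : ∀ a b, EH a b → EStar E a b) (hCu : SupportedOn Cu EH) (hQ : wdp Cu = wdp C)
    {j i : Fin n} (hwtr : InWTR E (cw C) j i) : EH j i ∧ Cu i j = C i j := by
  obtain ⟨D, hD0, hD⟩ := hdag.exists_abs_pathWeight_le (cw C)
  have hji := hdag.ne_of_edge hwtr.1
  set x := distPoint E (cw C) D j with hxdef
  have hx : x ∈ wdp C := distPoint_mem_wdp hdag hC hD0.le hD j
  have hxj : x j = 0 := distPoint_self hdag
  have hxi : x i = cw C j i := by
    rw [hxdef, distPoint_of_reaches ⟨_, isPathFrom_pair hwtr.1⟩, hwtr.pathDist_eq hdag]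
  have hCij : C i j = ((x i - x j : ℝ) : Trop) := by
    rw [hxi, hxj, sub_zero, coe_cw ((hC.2 i j hji.symm).2 hwtr.1)]
  obtain ⟨b, hib, hb⟩ := exists_eq_sub_of_wdp_eq hQ hx hji.symm hCij
  have hEHbi : EH b i := (hCu.2 i b hib).1 (hb ▸ WithTop.coe_ne_top)
  have hbi : Reaches E b i := (hEH b i hEHbi).2
  have hdist : pathDist E (cw C) b i ≤ x i - x b := by
    have := (hQ ▸ distPoint_mem_wdp hdag hC hD0.le hD b : _ ∈ wdp Cu) i b hib
    rwa [hb, distPoint_of_reaches hbi, distPoint_self hdag, sub_zero, WithTop.coe_le_coe] at this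
  have hjb : Reaches E j b := by
    by_contra hjb
    have hxb : 3 * D ≤ x b := three_mul_le_distPoint hD0.le hjb
    linarith [(abs_le.1 (abs_pathDist_le hdag hD hbi)).1,
      (abs_le.1 (abs_le_of_edge hD hwtr.1)).2]
  obtain rfl : b = j := by
    by_contra hbj
    have := hwtr.lt_pathDist_add hdag hjb hbi hbj hib.symm
    rw [hxdef, distPoint_of_reaches hjb] at hdist
    linarith
  exact ⟨hEHbi, hb.trans hCij.symm⟩

end Minimality

/-- `Q(C) = Q(C^♭)`, and `(G^♭_w, w^♭)` is the unique minimal such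
weighted DAG: any weighted DAG `(H, u)` with edges in `E*` and `Q(C_u) = Q(C)` contains
`G^♭_w` with the same weights there; and `w^♭` is the unique weight vector on `G^♭_w`
whose weighted digraph polyhedron is `Q(C^♭)`. -/
theorem stmt9 {n : ℕ} (E : Fin n → Fin n → Prop) (C : Matrix (Fin n) (Fin n) Trop)
    (hdag : IsDAG E) (hsupp : SupportedOn C E) :
    wdp C = wdp (CflatM E C) ∧
    (∀ (EH : Fin n → Fin n → Prop) (Cu : Matrix (Fin n) (Fin n) Trop),
      (∀ a b, EH a b → EStar E a b) → SupportedOn Cu EH → wdp Cu = wdp C →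
      ∀ j i, InWTR E (cw C) j i → EH j i ∧ Cu i j = C i j) ∧
    (∀ Cu : Matrix (Fin n) (Fin n) Trop,
      SupportedOn Cu (fun a b => InWTR E (cw C) a b) →
      wdp Cu = wdp (CflatM E C) → Cu = CflatM E C) := by
  have hflat := wdp_eq_wdp_cflatM hdag hsupp
  refine ⟨hflat,
    fun EH Cu hEH hCu hQ j i hwtr => hwtr.edge_and_eq_of_wdp_eq hdag hsupp hEH hCu hQ,
    fun Cu hCu hQ => hCu.ext hsupp.cflatM fun a b hab hw => ?_⟩
  have hsub : ∀ a b, InWTR E (cw C) a b → EStar E a b :=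
    fun a b h => ⟨hdag.ne_of_edge h.1, _, isPathFrom_pair h.1⟩
  rw [cflatM_apply_of_inWTR hab hw]
  exact (hw.edge_and_eq_of_wdp_eq hdag hsupp hsub hCu (hQ.trans hflat.symm)).2
end
end
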